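/- For all matrices A, B in SL(2,ℝ) and all m, n ≥ 1, one has tr([Aᵐ, Bⁿ]) − 2 = S_m(tr(A))² · S_n(tr(B))² · (tr([A,B]) − 2), where [X,Y] = X Y X⁻¹ Y⁻¹. -/
import Mathlib


/-- Chebyshev S-polynomials for natural indices:
`S 0 = 0`, `S 1 = 1`, `S (n+2) x = x * S (n+1) x - S n x`. -/
noncomputable def chebSNat : ℕ → ℝ → ℝ
  | 0, _ => 0
  | 1, _ => 1
  | n + 2, x => x * chebSNat (n + 1) x - chebSNat n x

/-- Chebyshev S-polynomials for integer indices, with `S m = -S (-m)` for `m < 0`. -/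
noncomputable def chebS (m : ℤ) (x : ℝ) : ℝ :=
  if 0 ≤ m then chebSNat m.toNat x else -chebSNat (-m).toNat x

/-- The trace of an element of `SL(2, ℝ)`, viewed as a matrix. -/
noncomputable def trSL (A : Matrix.SpecialLinearGroup (Fin 2) ℝ) : ℝ :=
  Matrix.trace (A : Matrix (Fin 2) (Fin 2) ℝ)

lemma chebS_natCast (m : ℕ) (x : ℝ) : chebS (m : ℤ) x = chebSNat m x := by
  simp [chebS]

lemma cheb_pell (x : ℝ) (m : ℕ) :
    chebSNat (m + 1) x ^ 2 - x * chebSNat (m + 1) x * chebSNat m x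
      + chebSNat m x ^ 2 = 1 := by
  induction m with
  | zero => simp [chebSNat]
  | succ k ih =>
    show chebSNat (k + 2) x ^ 2 - x * chebSNat (k + 2) x * chebSNat (k + 1) x
      + chebSNat (k + 1) x ^ 2 = 1
    rw [show chebSNat (k + 2) x = x * chebSNat (k + 1) x - chebSNat k x from rfl]
    linear_combination ih

lemma fricke (X Y : Matrix.SpecialLinearGroup (Fin 2) ℝ) :
    trSL (X * Y * X⁻¹ * Y⁻¹) =
      trSL X ^ 2 + trSL Y ^ 2 + trSL (X * Y) ^ 2 -
        trSL X * trSL Y * trSL (X * Y) - 2 := by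
  have hX : (X : Matrix (Fin 2) (Fin 2) ℝ).det = 1 := X.prop
  have hY : (Y : Matrix (Fin 2) (Fin 2) ℝ).det = 1 := Y.prop
  rw [Matrix.det_fin_two] at hX hY
  simp only [trSL, Matrix.SpecialLinearGroup.coe_mul, Matrix.SpecialLinearGroup.coe_inv,
    Matrix.adjugate_fin_two, Matrix.trace_fin_two, Matrix.mul_apply, Fin.sum_univ_two,
    Matrix.of_apply, Matrix.cons_val', Matrix.cons_val_zero, Matrix.cons_val_one,
    Matrix.head_cons, Matrix.head_fin_const, Matrix.empty_val', Matrix.cons_val_fin_one]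
  set x0 := (X : Matrix (Fin 2) (Fin 2) ℝ) 0 0
  set x1 := (X : Matrix (Fin 2) (Fin 2) ℝ) 0 1
  set x2 := (X : Matrix (Fin 2) (Fin 2) ℝ) 1 0
  set x3 := (X : Matrix (Fin 2) (Fin 2) ℝ) 1 1
  set y0 := (Y : Matrix (Fin 2) (Fin 2) ℝ) 0 0
  set y1 := (Y : Matrix (Fin 2) (Fin 2) ℝ) 0 1
  set y2 := (Y : Matrix (Fin 2) (Fin 2) ℝ) 1 0
  set y3 := (Y : Matrix (Fin 2) (Fin 2) ℝ) 1 1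
  linear_combination (((-2):ℝ) + y3^2 + (2:ℝ)*y0*y3 + y0^2) * hX +
    (x3^2 + (2:ℝ)*x1*x2 + x0^2) * hY

lemma trSL_inv (X : Matrix.SpecialLinearGroup (Fin 2) ℝ) : trSL X⁻¹ = trSL X := by
  simp only [trSL, Matrix.SpecialLinearGroup.coe_inv, Matrix.adjugate_fin_two,
    Matrix.trace_fin_two, Matrix.of_apply, Matrix.cons_val', Matrix.cons_val_zero,
    Matrix.cons_val_one, Matrix.head_cons, Matrix.empty_val', Matrix.cons_val_fin_one,
    Matrix.vecHead]
  ring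

lemma trSL_swap (X Y : Matrix.SpecialLinearGroup (Fin 2) ℝ) :
    trSL (X * Y * X⁻¹ * Y⁻¹) = trSL (Y * X * Y⁻¹ * X⁻¹) := by
  have h : (Y * X * Y⁻¹ * X⁻¹)⁻¹ = X * Y * X⁻¹ * Y⁻¹ := by group
  rw [← h, trSL_inv]

lemma cayley (A : Matrix.SpecialLinearGroup (Fin 2) ℝ) :
    (A : Matrix (Fin 2) (Fin 2) ℝ) * (A : Matrix (Fin 2) (Fin 2) ℝ)
      = trSL A • (A : Matrix (Fin 2) (Fin 2) ℝ) - 1 := by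
  have hA : (A : Matrix (Fin 2) (Fin 2) ℝ).det = 1 := A.prop
  rw [Matrix.det_fin_two] at hA
  ext i j
  fin_cases i <;> fin_cases j <;>
    simp [Matrix.mul_apply, Fin.sum_univ_two, trSL, Matrix.trace_fin_two,
      Matrix.sub_apply, Matrix.smul_apply, Matrix.one_apply, smul_eq_mul] <;>
    linarith [hA]

lemma pow_expand (A : Matrix.SpecialLinearGroup (Fin 2) ℝ) (m : ℕ) :
    ((A ^ (m + 1) : Matrix.SpecialLinearGroup (Fin 2) ℝ) : Matrix (Fin 2) (Fin 2) ℝ)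
      = chebSNat (m + 1) (trSL A) • (A : Matrix (Fin 2) (Fin 2) ℝ)
        - chebSNat m (trSL A) • (1 : Matrix (Fin 2) (Fin 2) ℝ) := by
  induction m with
  | zero => simp [chebSNat]
  | succ k ih =>
    rw [pow_succ, Matrix.SpecialLinearGroup.coe_mul, ih, sub_mul, smul_mul_assoc,
      smul_mul_assoc, one_mul, cayley,
      show chebSNat (k + 2) (trSL A)
        = trSL A * chebSNat (k + 1) (trSL A) - chebSNat k (trSL A) from rfl]
    module

lemma trSL_pow (A : Matrix.SpecialLinearGroup (Fin 2) ℝ) (m : ℕ) :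
    trSL (A ^ (m + 1)) = chebSNat (m + 1) (trSL A) * trSL A
      - 2 * chebSNat m (trSL A) := by
  rw [trSL, pow_expand, Matrix.trace_sub, Matrix.trace_smul, Matrix.trace_smul,
    Matrix.trace_one]
  simp [trSL]
  ring

lemma trSL_pow_mul (A B : Matrix.SpecialLinearGroup (Fin 2) ℝ) (m : ℕ) :
    trSL (A ^ (m + 1) * B) = chebSNat (m + 1) (trSL A) * trSL (A * B)
      - chebSNat m (trSL A) * trSL B := by
  rw [trSL, Matrix.SpecialLinearGroup.coe_mul, pow_expand, sub_mul, smul_mul_assoc,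
    smul_mul_assoc, one_mul, Matrix.trace_sub, Matrix.trace_smul, Matrix.trace_smul]
  simp [trSL]

lemma key (A B : Matrix.SpecialLinearGroup (Fin 2) ℝ) (m : ℕ) :
    trSL (A ^ (m + 1) * B * (A ^ (m + 1))⁻¹ * B⁻¹) - 2 =
      chebSNat (m + 1) (trSL A) ^ 2 * (trSL (A * B * A⁻¹ * B⁻¹) - 2) := by
  rw [fricke (A ^ (m + 1)) B, fricke A B, trSL_pow, trSL_pow_mul]
  linear_combination (4 - trSL B ^ 2) * cheb_pell (trSL A) m

/-- For `A, B ∈ SL(2,ℝ)` and `m, n ≥ 1`,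
`tr([Aᵐ, Bⁿ]) − 2 = S m (tr A)² · S n (tr B)² · (tr([A,B]) − 2)`. -/
theorem trace_commutator_powers (A B : Matrix.SpecialLinearGroup (Fin 2) ℝ)
    (m n : ℕ) (hm : 1 ≤ m) (hn : 1 ≤ n) :
    trSL (A ^ m * B ^ n * (A ^ m)⁻¹ * (B ^ n)⁻¹) - 2 =
      chebS m (trSL A) ^ 2 * chebS n (trSL B) ^ 2 *
        (trSL (A * B * A⁻¹ * B⁻¹) - 2) := by
  obtain ⟨m', rfl⟩ : ∃ k, m = k + 1 := ⟨m - 1, (Nat.succ_pred_eq_of_pos hm).symm⟩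
  obtain ⟨n', rfl⟩ : ∃ k, n = k + 1 := ⟨n - 1, (Nat.succ_pred_eq_of_pos hn).symm⟩
  rw [chebS_natCast, chebS_natCast, key A (B ^ (n' + 1)) m',
    trSL_swap A (B ^ (n' + 1)), key B A n', trSL_swap B A]
  ring
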